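/- arXiv:1911.03506 — 5 statements merged into one kernel-verified Lean document; each statement's English description precedes it below -/
import Mathlib

section
/- Let 0 ≤ β < α ≤ 1, let ω_α ∈ M_α and ω_β ∈ M_β with ω_α(t) > 0 for t > 0. Then there exists a constant K > 0, depending only on ω_α and ω_β, such that for every natural number n ≥ 1, Σ_{k=1}^{n} ω_β(2^{−k})/ω_α(2^{−k}) ≤ K·ω_β(2^{−n})/ω_α(2^{−n}). -/
/-- A modulus of continuity: continuous, nondecreasing, subadditive on `[0,∞)`,
vanishing at `0`. -/
def IsModulus (ω : ℝ → ℝ) : Prop :=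
  ContinuousOn ω (Set.Ici 0) ∧ ω 0 = 0 ∧
  (∀ s t : ℝ, 0 ≤ s → s ≤ t → ω s ≤ ω t) ∧
  (∀ s t : ℝ, 0 ≤ s → 0 ≤ t → ω (s + t) ≤ ω s + ω t)

/-- Leindler's class `M_α` of moduli of continuity. -/
def MemMClass (α : ℝ) (ω : ℝ → ℝ) : Prop :=
  IsModulus ω ∧
  (∀ α' : ℝ, α < α' → ∃ μ : ℕ, 1 ≤ μ ∧ ∀ n : ℕ, 1 ≤ n →
    2 * ω (1 / 2 ^ n) < (2:ℝ) ^ ((μ:ℝ) * α') * ω (1 / 2 ^ (n + μ))) ∧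
  (∀ ν : ℕ, 1 ≤ ν → ∃ N : ℕ, ∀ n : ℕ, N < n →
    (2:ℝ) ^ ((ν:ℝ) * α) * ω (1 / 2 ^ (n + ν)) < 2 * ω (1 / 2 ^ n))

/-! Put `r k = ω_β(2^{-k}) / ω_α(2^{-k})`. Subadditivity of `ω_β` and monotonicity of `ω_α` give
`r k ≤ 2^d r (k + d)`. Choosing `β < β' < α`, condition (i) for `ω_β` at `β'` and condition (ii)
for `ω_α` with the same step `μ` give, for large `m`, the contraction `r m ≤ q r (m + μ)` with
`q = 2^{μ(β' - α)} < 1`. Splitting `∑_{k ≤ n} r k` into `∑_{k ≤ n - μ} r k` and the last `μ` terms,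
an induction on `n` closes with any `K ≥ μ 2^μ / (1 - q)` that also covers the finitely many
small `n`. -/

open Finset

theorem exists_sum_Icc_le_mul_of_contracting {r : ℕ → ℝ} {μ N : ℕ} {C q : ℝ} (hμ : 1 ≤ μ)
    (hr : ∀ k, 1 ≤ k → 0 < r k) (hgrowth : ∀ k l, k ≤ l → l ≤ k + μ → r k ≤ C * r l)
    (hq : q < 1) (hcontr : ∀ m, N < m → r m ≤ q * r (m + μ)) :
    ∃ K, 0 < K ∧ ∀ n, 1 ≤ n → ∑ k ∈ Icc 1 n, r k ≤ K * r n := by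
  have hC : 1 ≤ C := by
    have h1 := hgrowth 1 1 le_rfl (by omega)
    have h2 := hr 1 le_rfl
    nlinarith
  obtain ⟨K₀, hK₀⟩ :=
    ((Icc 1 (N + μ)).image fun n => (∑ k ∈ Icc 1 n, r k) / r n).exists_le
  set K := max K₀ (μ * C / (1 - q))
  have hK : 0 < K := lt_max_of_lt_right
    (div_pos (mul_pos (by exact_mod_cast hμ) (by linarith)) (sub_pos.mpr hq))
  have hKq : K * q + μ * C ≤ K := by
    have := (div_le_iff₀ (sub_pos.mpr hq)).mp (le_max_right K₀ (μ * C / (1 - q)))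
    linarith
  refine ⟨K, hK, fun n => ?_⟩
  induction n using Nat.strong_induction_on with
  | _ n ih =>
  intro hn
  rcases le_or_gt n (N + μ) with hsmall | hlarge
  · have hratio := hK₀ _ (mem_image_of_mem _ (mem_Icc.mpr ⟨hn, hsmall⟩))
    rw [div_le_iff₀ (hr n hn)] at hratio
    exact hratio.trans (mul_le_mul_of_nonneg_right (le_max_left _ _) (hr n hn).le)
  obtain ⟨m, rfl⟩ : ∃ m, n = m + μ := ⟨n - μ, by omega⟩
  have hsplit : ∑ k ∈ Icc 1 (m + μ), r k = ∑ k ∈ Icc 1 m, r k + ∑ k ∈ Ioc m (m + μ), r k := by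
    have hIcc (j : ℕ) : Icc 1 j = Ioc 0 j := Icc_add_one_left_eq_Ioc 0 j
    rw [hIcc, hIcc]
    exact (sum_Ioc_consecutive r m.zero_le (by omega)).symm
  have htail : ∑ k ∈ Ioc m (m + μ), r k ≤ μ * (C * r (m + μ)) := by
    have := sum_le_card_nsmul (Ioc m (m + μ)) r (C * r (m + μ)) fun k hk =>
      hgrowth k (m + μ) (mem_Ioc.mp hk).2 (by linarith [(mem_Ioc.mp hk).1])
    simpa only [Nat.card_Ioc, add_tsub_cancel_left, nsmul_eq_mul] using this
  have hrn := (hr (m + μ) hn).le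
  calc ∑ k ∈ Icc 1 (m + μ), r k
      ≤ K * r m + μ * (C * r (m + μ)) := hsplit ▸ add_le_add (ih m (by omega) (by omega)) htail
    _ ≤ K * (q * r (m + μ)) + μ * (C * r (m + μ)) := by
        gcongr
        exact hcontr m (by omega)
    _ = (K * q + μ * C) * r (m + μ) := by ring
    _ ≤ K * r (m + μ) := by gcongr

namespace IsModulus

variable {ω : ℝ → ℝ}

theorem mono (h : IsModulus ω) {s t : ℝ} (hs : 0 ≤ s) (hst : s ≤ t) : ω s ≤ ω t :=
  h.2.2.1 s t hs hst

theorem nonneg (h : IsModulus ω) {t : ℝ} (ht : 0 ≤ t) : 0 ≤ ω t :=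
  h.2.1 ▸ h.mono le_rfl ht

theorem dyadic_anti (h : IsModulus ω) {k l : ℕ} (hkl : k ≤ l) : ω (1 / 2 ^ l) ≤ ω (1 / 2 ^ k) :=
  h.mono (by positivity) (one_div_pow_le_one_div_pow_of_le one_le_two hkl)

theorem dyadic_le_two_pow_mul (h : IsModulus ω) (k d : ℕ) :
    ω (1 / 2 ^ k) ≤ 2 ^ d * ω (1 / 2 ^ (k + d)) := by
  induction d with
  | zero => simp
  | succ d ih =>
    have hhalf : (1 : ℝ) / 2 ^ (k + d) = 1 / 2 ^ (k + d + 1) + 1 / 2 ^ (k + d + 1) := by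
      rw [pow_succ]; ring
    have hdouble := h.2.2.2 (1 / 2 ^ (k + d + 1)) (1 / 2 ^ (k + d + 1)) (by positivity)
      (by positivity)
    rw [← hhalf] at hdouble
    calc ω (1 / 2 ^ k) ≤ 2 ^ d * ω (1 / 2 ^ (k + d)) := ih
      _ ≤ 2 ^ d * (2 * ω (1 / 2 ^ (k + d + 1))) := by gcongr; linarith
      _ = 2 ^ (d + 1) * ω (1 / 2 ^ (k + (d + 1))) := by ring_nf

theorem dyadic_div_le_two_pow_mul {u : ℝ → ℝ} (hω : IsModulus ω) (hu : IsModulus u)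
    (hu_pos : ∀ t, 0 < t → 0 < u t) (k d : ℕ) :
    ω (1 / 2 ^ k) / u (1 / 2 ^ k) ≤ 2 ^ d * (ω (1 / 2 ^ (k + d)) / u (1 / 2 ^ (k + d))) := by
  rw [← mul_div_assoc]
  exact div_le_div₀ (mul_nonneg (by positivity) (hω.nonneg (by positivity)))
    (hω.dyadic_le_two_pow_mul k d) (hu_pos _ (by positivity)) (hu.dyadic_anti (by omega))

theorem dyadic_div_le_two_pow_mul_of_le {u : ℝ → ℝ} (hω : IsModulus ω) (hu : IsModulus u)
    (hu_pos : ∀ t, 0 < t → 0 < u t) {k l : ℕ} (μ : ℕ) (hkl : k ≤ l) (hlk : l ≤ k + μ) :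
    ω (1 / 2 ^ k) / u (1 / 2 ^ k) ≤ 2 ^ μ * (ω (1 / 2 ^ l) / u (1 / 2 ^ l)) := by
  obtain ⟨d, rfl⟩ := Nat.exists_eq_add_of_le hkl
  refine (hω.dyadic_div_le_two_pow_mul hu hu_pos k d).trans ?_
  gcongr
  · exact div_nonneg (hω.nonneg (by positivity)) (hu_pos _ (by positivity)).le
  · exact one_le_two
  · omega

end IsModulus

theorem MemMClass.dyadic_pos {α : ℝ} {ω : ℝ → ℝ} (h : MemMClass α ω) {k : ℕ} (hk : 1 ≤ k) :
    0 < ω (1 / 2 ^ k) := by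
  obtain ⟨μ, -, hμ⟩ := h.2.1 (α + 1) (by linarith)
  have hshift : 0 < ω (1 / 2 ^ (k + μ)) :=
    pos_of_mul_pos_right ((mul_nonneg two_pos.le (h.1.nonneg (by positivity))).trans_lt (hμ k hk))
      (by positivity)
  exact hshift.trans_le (h.1.dyadic_anti (by omega))

theorem div_le_div_mul_div_of_two_mul_lt {a b a' b' A B : ℝ} (ha : 0 ≤ a) (hb' : 0 < b')
    (hB : 0 < B) (hA : 2 * a < A * a') (hB' : B * b' < 2 * b) : a / b ≤ A / B * (a' / b') := by
  rw [div_mul_div_comm]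
  calc a / b ≤ (A * a' / 2) / (B * b' / 2) := by
        apply div_le_div₀ <;> first | positivity | linarith
    _ = A * a' / (B * b') := by field_simp

theorem leindler_sum_bound_increasing_general
    (α β : ℝ) (hβα : β < α)
    (ωα ωβ : ℝ → ℝ) (hωα : MemMClass α ωα) (hωβ : MemMClass β ωβ)
    (hωαpos : ∀ t : ℝ, 0 < t → 0 < ωα t) :
    ∃ K : ℝ, 0 < K ∧ ∀ n : ℕ, 1 ≤ n →
      ∑ k ∈ Finset.Icc 1 n, ωβ (1 / 2 ^ k) / ωα (1 / 2 ^ k) ≤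
        K * (ωβ (1 / 2 ^ n) / ωα (1 / 2 ^ n)) := by
  obtain ⟨μ, hμ, hωβμ⟩ := hωβ.2.1 ((β + α) / 2) (by linarith)
  obtain ⟨N, hωαN⟩ := hωα.2.2 μ hμ
  have hq : (2 : ℝ) ^ ((μ : ℝ) * ((β + α) / 2)) / 2 ^ ((μ : ℝ) * α) < 1 := by
    have hμpos : (0 : ℝ) < μ := by exact_mod_cast hμ
    exact (div_lt_one (by positivity)).mpr
      (Real.rpow_lt_rpow_of_exponent_lt one_lt_two (by nlinarith))
  refine exists_sum_Icc_le_mul_of_contracting (N := N) hμ (fun k hk => ?_)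
    (fun k l => hωβ.1.dyadic_div_le_two_pow_mul_of_le hωα.1 hωαpos μ) hq (fun m hm => ?_)
  · exact div_pos (hωβ.dyadic_pos hk) (hωαpos _ (by positivity))
  · exact div_le_div_mul_div_of_two_mul_lt (hωβ.1.nonneg (by positivity))
      (hωαpos _ (by positivity)) (by positivity) (hωβμ m (by omega)) (hωαN m hm)

/-- Lemma 1, (4.1). For `0 ≤ β < α ≤ 1`, `ω_α ∈ M_α`,
`ω_β ∈ M_β` with `ω_α` positive on positives:
`Σ_{k=1}^n ω_β(2^{-k})/ω_α(2^{-k}) ≤ K ω_β(2^{-n})/ω_α(2^{-n})`. -/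
theorem leindler_sum_bound_increasing
    (α β : ℝ) (hβ : 0 ≤ β) (hβα : β < α) (hα : α ≤ 1)
    (ωα ωβ : ℝ → ℝ) (hωα : MemMClass α ωα) (hωβ : MemMClass β ωβ)
    (hωαpos : ∀ t : ℝ, 0 < t → 0 < ωα t) :
    ∃ K : ℝ, 0 < K ∧ ∀ n : ℕ, 1 ≤ n →
      ∑ k ∈ Finset.Icc 1 n, ωβ (1 / 2 ^ k) / ωα (1 / 2 ^ k) ≤
        K * (ωβ (1 / 2 ^ n) / ωα (1 / 2 ^ n)) :=
  leindler_sum_bound_increasing_general α β hβα ωα ωβ hωα hωβ hωαpos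
end

section
/- Let a ∈ ℂ with |a| < 1, let θ : ℝ → ℝ be a continuous strictly increasing function with e^{iθ(t)} = τ_a(e^{it}) for all t ∈ ℝ, and let f ∈ C(𝕋). Then F = f ∘ θ^{−1} is a continuous 2π-periodic function and for every δ > 0, ω(f ∘ θ^{−1}, δ) ≤ (2/(1 − |a|))·ω(f, δ). -/
/-- The Möbius transform `τ_a(z) = (z - a)/(1 - conj a · z)`. -/
noncomputable def tauA (a z : ℂ) : ℂ := (z - a) / (1 - (starRingEnd ℂ) a * z)

/-- The modulus of continuity `ω(g, δ) = sup { |g x - g y| : |x - y| ≤ δ }`. -/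
noncomputable def modContR (g : ℝ → ℂ) (δ : ℝ) : ℝ :=
  sSup {q : ℝ | ∃ x y : ℝ, |x - y| ≤ δ ∧ q = ‖g x - g y‖}

/-! The explicit branch `phase a t = t - 2 arg (1 - conj a e^{it})` of the argument of
`τ_a(e^{it})` has derivative `Re ((1 + u) / (1 - u)) = (1 - |u|²) / |1 - u|² ≥ (1 - |a|) / (1 + |a|)`,
where `u = conj a e^{it}`. A continuous lift `θ` differs from it by a constant, so `θ⁻¹` is
Lipschitz with constant `L = (1 + |a|) / (1 - |a|)`. Splitting a step of length `≤ L δ` into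
`⌈L⌉ ≤ L + 1` steps of length `≤ δ` gives `ω(f ∘ θ⁻¹, δ) ≤ (L + 1) ω(f, δ) = 2 / (1 - |a|) ω(f, δ)`. -/
open Bornology Set

section ModulusOfContinuity

variable {g : ℝ → ℂ} {δ : ℝ}

lemma norm_sub_le_modContR (hg : IsBounded (range g)) {x y : ℝ} (h : |x - y| ≤ δ) :
    ‖g x - g y‖ ≤ modContR g δ := by
  refine le_csSup ⟨Metric.diam (range g), ?_⟩ ⟨x, y, h, rfl⟩
  rintro _ ⟨x, y, -, rfl⟩
  rw [← dist_eq_norm]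
  exact Metric.dist_le_diam_of_mem hg (mem_range_self x) (mem_range_self y)

lemma modContR_nonneg (hg : IsBounded (range g)) (hδ : 0 ≤ δ) : 0 ≤ modContR g δ := by
  simpa using norm_sub_le_modContR hg (x := 0) (y := 0) (by simpa using hδ)

lemma norm_sub_le_nat_mul_modContR (hg : IsBounded (range g)) (n : ℕ) {x y : ℝ}
    (h : |x - y| ≤ n * δ) : ‖g x - g y‖ ≤ n * modContR g δ := by
  rcases n.eq_zero_or_pos with rfl | hn
  · obtain rfl : x = y := by simpa [sub_eq_zero] using h
    simp
  have hn' : (0 : ℝ) < n := Nat.cast_pos.mpr hn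
  set p : ℕ → ℝ := fun k => y + k * ((x - y) / n)
  have hstep : ∀ k, |p k - p (k + 1)| ≤ δ := fun k => by
    simpa [p, add_mul, abs_div, abs_of_pos hn', div_le_iff₀', hn'] using h
  calc ‖g x - g y‖ = dist (g (p 0)) (g (p n)) := by
        rw [dist_comm, dist_eq_norm]; simp [p, mul_div_cancel₀ _ hn'.ne']
    _ ≤ ∑ k ∈ Finset.range n, dist (g (p k)) (g (p (k + 1))) := dist_le_range_sum_dist (fun k => g (p k)) n
    _ ≤ ∑ k ∈ Finset.range n, modContR g δ := Finset.sum_le_sum fun k _ => by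
        rw [dist_eq_norm]; exact norm_sub_le_modContR hg (hstep k)
    _ = n * modContR g δ := by simp

lemma modContR_comp_le (hg : IsBounded (range g)) (hδ : 0 ≤ δ) {φ : ℝ → ℝ} {L : ℝ}
    (hL : 0 ≤ L) (hφ : ∀ x y, |φ x - φ y| ≤ L * |x - y|) :
    modContR (g ∘ φ) δ ≤ (L + 1) * modContR g δ := by
  have hω := modContR_nonneg hg hδ
  refine Real.sSup_le ?_ (by positivity)
  rintro _ ⟨x, y, hxy, rfl⟩
  calc ‖g (φ x) - g (φ y)‖ ≤ ⌈L⌉₊ * modContR g δ := by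
        refine norm_sub_le_nat_mul_modContR hg _ ?_
        calc |φ x - φ y| ≤ L * |x - y| := hφ x y
          _ ≤ ⌈L⌉₊ * δ := mul_le_mul (Nat.le_ceil L) hxy (abs_nonneg _) (Nat.cast_nonneg _)
    _ ≤ (L + 1) * modContR g δ := by gcongr; exact (Nat.ceil_lt_add_one hL).le

end ModulusOfContinuity

section Phase

open Complex ComplexConjugate

/-- `1 - conj a e^{it}` stays in the right half-plane, where `arg` is smooth. -/
noncomputable def phase (a : ℂ) (t : ℝ) : ℝ := t - 2 * arg (1 - conj a * exp (t * I))

variable {a : ℂ}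

lemma norm_conj_mul_exp_mul_I (a : ℂ) (t : ℝ) : ‖conj a * exp (t * I)‖ = ‖a‖ := by
  simp [norm_exp_ofReal_mul_I]

lemma re_one_sub_pos {z : ℂ} (hz : ‖z‖ < 1) : 0 < (1 - z).re := by
  simp only [sub_re, one_re, sub_pos]
  exact (re_le_norm z).trans_lt hz

lemma hasDerivAt_phase (ha : ‖a‖ < 1) (t : ℝ) :
    HasDerivAt (phase a)
      ((1 + conj a * exp (t * I)) / (1 - conj a * exp (t * I))).re t := by
  set u : ℝ → ℂ := fun s => conj a * exp (s * I)
  have hu : HasDerivAt u (I * u t) t := by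
    have := ((hasDerivAt_id (t : ℂ)).mul_const I).cexp.comp_ofReal.const_mul (conj a)
    simpa [u, mul_comm, mul_left_comm, mul_assoc] using this
  have hpos : 0 < (1 - u t).re := re_one_sub_pos ((norm_conj_mul_exp_mul_I a t).trans_lt ha)
  have hlog : HasDerivAt (fun s => (log (1 - u s)).im) (-(I * u t) / (1 - u t)).im t :=
    imCLM.hasFDerivAt.comp_hasDerivAt t ((hu.const_sub 1).clog_real (Or.inl hpos))
  have hdecomp : phase a = fun s => s - 2 * (log (1 - u s)).im := by
    funext s; simp [phase, log_im, u]
  rw [hdecomp]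
  refine ((hasDerivAt_id' t).sub (hlog.const_mul 2)).congr_deriv ?_
  have hne : 1 - u t ≠ 0 := fun h => by simp [h] at hpos
  have h1 : (1 + u t) / (1 - u t) = 1 + 2 * (u t / (1 - u t)) := by field_simp; ring
  have h2 : -(I * u t) / (1 - u t) = -I * (u t / (1 - u t)) := by ring
  simp only [u] at h1 h2 ⊢
  rw [h1, h2]
  simp

lemma le_re_one_add_div_one_sub {u : ℂ} (hu : ‖u‖ < 1) :
    (1 - ‖u‖) / (1 + ‖u‖) ≤ ((1 + u) / (1 - u)).re := by
  have hre : ((1 + u) / (1 - u)).re = (1 - ‖u‖ ^ 2) / normSq (1 - u) := by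
    rw [div_re, ← add_div, ← normSq_eq_norm_sq]
    simp only [add_re, one_re, sub_re, add_im, one_im, sub_im, normSq_apply]
    ring
  have hN : normSq (1 - u) ≤ (1 + ‖u‖) ^ 2 := by
    rw [normSq_eq_norm_sq]; gcongr; exact (norm_sub_le _ _).trans (by simp)
  have hN0 : 0 < normSq (1 - u) := normSq_pos.mpr fun h => by simp [← sub_eq_zero.mp h] at hu
  rw [hre, div_le_div_iff₀ (by positivity) hN0]
  have h0 := norm_nonneg u
  nlinarith

lemma exp_phase_mul_I (ha : ‖a‖ < 1) (t : ℝ) :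
    exp (phase a t * I) = tauA a (exp (t * I)) := by
  set e := exp (t * I)
  set w := 1 - conj a * e
  set E := exp (arg w * I)
  have hw : w ≠ 0 := fun h => by
    have hre : 0 < w.re := re_one_sub_pos ((norm_conj_mul_exp_mul_I a t).trans_lt ha)
    simp [h] at hre
  have hconj_exp : ∀ x : ℝ, conj (exp (x * I)) = (exp (x * I))⁻¹ := fun x => by
    rw [← exp_conj, ← exp_neg]; simp
  have hpolar : (‖w‖ : ℂ) * E = w := norm_mul_exp_arg_mul_I w
  have hpolar_conj : (‖w‖ : ℂ) * E⁻¹ = conj w := by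
    conv_rhs => rw [← hpolar]
    rw [map_mul, conj_ofReal, hconj_exp]
  have hsq : E⁻¹ ^ 2 = conj w / w := by
    have : (‖w‖ : ℂ) ≠ 0 := by exact_mod_cast norm_ne_zero_iff.mpr hw
    calc E⁻¹ ^ 2 = (‖w‖ * E⁻¹) / (‖w‖ * E) := by field_simp [exp_ne_zero]
      _ = conj w / w := by rw [hpolar_conj, hpolar]
  have hecw : e * conj w = e - a := by
    simp only [w, map_sub, map_one, map_mul, conj_conj, e, hconj_exp]
    field_simp
  calc exp (phase a t * I) = e * E⁻¹ ^ 2 := by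
        simp only [phase, e, E, w]; push_cast
        rw [sub_mul, exp_sub, div_eq_mul_inv, ← exp_neg, ← exp_neg, ← exp_nat_mul]
        push_cast; ring_nf
    _ = tauA a e := by rw [hsq, tauA, mul_div_assoc', hecw]

lemma phase_add_two_pi (a : ℂ) (t : ℝ) : phase a (t + 2 * Real.pi) = phase a t + 2 * Real.pi := by
  have : exp (↑(t + 2 * Real.pi) * I) = exp (t * I) := by
    push_cast; rw [add_mul, exp_add, exp_two_pi_mul_I, mul_one]
  rw [phase, phase, this]; ring

lemma mul_sub_le_phase_sub (ha : ‖a‖ < 1) {s t : ℝ} (hst : s ≤ t) :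
    (1 - ‖a‖) / (1 + ‖a‖) * (t - s) ≤ phase a t - phase a s :=
  mul_sub_le_image_sub_of_le_deriv (fun x => (hasDerivAt_phase ha x).differentiableAt)
    (fun x => by
      rw [(hasDerivAt_phase ha x).deriv, ← norm_conj_mul_exp_mul_I a x]
      exact le_re_one_add_div_one_sub ((norm_conj_mul_exp_mul_I a x).trans_lt ha)) hst

end Phase

lemma exists_add_const_of_exp_mul_I_eq {θ ψ : ℝ → ℝ} (hθ : Continuous θ) (hψ : Continuous ψ)
    (h : ∀ t, Complex.exp (θ t * Complex.I) = Complex.exp (ψ t * Complex.I)) :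
    ∃ C, ∀ t, θ t = ψ t + C := by
  have hmem : MapsTo (θ - ψ) univ (AddSubgroup.zmultiples (2 * Real.pi)) := fun t _ => by
    obtain ⟨n, hn⟩ := Complex.exp_eq_exp_iff_exists_int.mp (h t)
    refine ⟨n, ?_⟩
    have him : θ t = ψ t + n * (2 * Real.pi) := by simpa using congrArg Complex.im hn
    simp [zsmul_eq_mul, him]
  refine ⟨θ 0 - ψ 0, fun t => ?_⟩
  have := isPreconnected_univ.constant_of_mapsTo (isDiscrete_iff_discreteTopology.mpr
      (inferInstanceAs (DiscreteTopology (AddSubgroup.zmultiples (2 * Real.pi)))))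
    (hθ.sub hψ).continuousOn hmem (mem_univ t) (mem_univ 0)
  simp only [Pi.sub_apply] at this
  linarith

lemma abs_sub_le_of_rightInverse {θ φ : ℝ → ℝ} {c : ℝ} (hc : 0 < c)
    (hθ : ∀ s t, s ≤ t → c * (t - s) ≤ θ t - θ s) (hφ : Function.RightInverse φ θ) (x y : ℝ) :
    |φ x - φ y| ≤ c⁻¹ * |x - y| := by
  have key : ∀ x y, φ y ≤ φ x → c * |φ x - φ y| ≤ |x - y| := fun x y hle => by
    simpa [abs_of_nonneg (sub_nonneg.mpr hle), hφ x, hφ y] using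
      (hθ _ _ hle).trans (le_abs_self _)
  rw [le_inv_mul_iff₀ hc]
  rcases le_total (φ y) (φ x) with hle | hle
  · exact key x y hle
  · rw [abs_sub_comm, abs_sub_comm x]
    exact key y x hle

theorem modulus_of_continuity_comp_inv_phase_general
    (a : ℂ) (ha : ‖a‖ < 1)
    (θ : ℝ → ℝ) (hθcont : Continuous θ)
    (hθ : ∀ t : ℝ, Complex.exp (θ t * Complex.I) =
      tauA a (Complex.exp (t * Complex.I)))
    (hθbij : Function.Bijective θ)
    (f : ℝ → ℂ) (hf : Continuous f) (hper : ∀ x : ℝ, f (x + 2 * Real.pi) = f x) :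
    Continuous (f ∘ Function.invFun θ) ∧
    (∀ x : ℝ, (f ∘ Function.invFun θ) (x + 2 * Real.pi) = (f ∘ Function.invFun θ) x) ∧
    ∀ δ : ℝ, 0 < δ →
      modContR (f ∘ Function.invFun θ) δ ≤ 2 / (1 - ‖a‖) * modContR f δ := by
  set φ := Function.invFun θ
  have hφ : Function.RightInverse φ θ := Function.rightInverse_invFun hθbij.surjective
  have hr : 0 < 1 - ‖a‖ := sub_pos.mpr ha
  obtain ⟨C, hC⟩ := exists_add_const_of_exp_mul_I_eq hθcont
    (continuous_iff_continuousAt.mpr fun t => (hasDerivAt_phase ha t).continuousAt)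
    fun t => (hθ t).trans (exp_phase_mul_I ha t).symm
  have hlip : ∀ x y, |φ x - φ y| ≤ (1 + ‖a‖) / (1 - ‖a‖) * |x - y| := by
    rw [← inv_div]
    refine abs_sub_le_of_rightInverse (by positivity) (fun s t hst => ?_) hφ
    simpa [hC] using mul_sub_le_phase_sub ha hst
  have hφper : ∀ x, φ (x + 2 * Real.pi) = φ x + 2 * Real.pi := fun x =>
    hθbij.injective (by rw [hφ, hC, phase_add_two_pi, add_right_comm, ← hC, hφ])
  have hbdd : IsBounded (range f) :=
    Function.Periodic.isBounded_of_continuous hper Real.two_pi_pos.ne' hf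
  refine ⟨hf.comp (LipschitzWith.of_dist_le' hlip).continuous,
    fun x => by simp only [Function.comp_apply, hφper, hper], fun δ hδ => ?_⟩
  calc modContR (f ∘ φ) δ ≤ ((1 + ‖a‖) / (1 - ‖a‖) + 1) * modContR f δ :=
        modContR_comp_le hbdd hδ.le (by positivity) hlip
    _ = 2 / (1 - ‖a‖) * modContR f δ := by field_simp; ring

/-- Lemma 4, upper estimate. If `θ` is a continuous strictly
increasing branch of the nonlinear phase and `f ∈ C(𝕋)`, then `F = f ∘ θ⁻¹` is
continuous, `2π`-periodic, and `ω(f ∘ θ⁻¹, δ) ≤ (2/(1 - |a|)) ω(f, δ)`. -/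
theorem modulus_of_continuity_comp_inv_phase
    (a : ℂ) (ha : ‖a‖ < 1)
    (θ : ℝ → ℝ) (hθcont : Continuous θ) (hθmono : StrictMono θ)
    (hθ : ∀ t : ℝ, Complex.exp (θ t * Complex.I) =
      tauA a (Complex.exp (t * Complex.I)))
    (hθbij : Function.Bijective θ)
    (f : ℝ → ℂ) (hf : Continuous f) (hper : ∀ x : ℝ, f (x + 2 * Real.pi) = f x) :
    Continuous (f ∘ Function.invFun θ) ∧
    (∀ x : ℝ, (f ∘ Function.invFun θ) (x + 2 * Real.pi) = (f ∘ Function.invFun θ) x) ∧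
    ∀ δ : ℝ, 0 < δ →
      modContR (f ∘ Function.invFun θ) δ ≤ 2 / (1 - ‖a‖) * modContR f δ :=
  modulus_of_continuity_comp_inv_phase_general a ha θ hθcont hθ hθbij f hf hper
end

section
/- Let a ∈ ℂ with |a| < 1. Then for all integers k, m, (1/2π)∫₀^{2π} τ_a(e^{it})^k · conj(τ_a(e^{it}))^m · p_a(t) dt equals 1 if k = m and 0 otherwise; that is, the system {t ↦ τ_a(e^{it})^k : k ∈ ℤ} is orthonormal with respect to the inner product ⟨f, g⟩_a = (1/2π)∫₀^{2π} f(t)·conj(g(t))·p_a(t) dt. -/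
/-- The weight `p_a(t) = (1 - |a|²)/|1 - conj a · e^{it}|²`. -/
noncomputable def pA (a : ℂ) (t : ℝ) : ℝ :=
  (1 - ‖a‖ ^ 2) / ‖1 - (starRingEnd ℂ) a * Complex.exp (t * Complex.I)‖ ^ 2

/-!
On the unit circle `|1 - conj a · z| = |z - a|`, so `p_a` is the Poisson kernel of the unit disc
at `a`, and integrating against it evaluates holomorphic functions at `a`. For `n ≥ 0`,
`τ_a ^ n` is holomorphic on a neighbourhood of the closed disc and vanishes at `a` unless `n = 0`;
since `|τ_a| = 1` on the circle, `conj τ_a = τ_a⁻¹` there, which reduces `n < 0` to `-n` and the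
inner product `⟨τ_a ^ k, τ_a ^ m⟩_a` to the integral of `τ_a ^ (k - m)`.
-/

open Complex Metric Real
open scoped ComplexConjugate

lemma norm_one_sub_conj_mul_eq_norm_sub {z : ℂ} (hz : ‖z‖ = 1) (a : ℂ) :
    ‖1 - conj a * z‖ = ‖z - a‖ := by
  have hzz : z * conj z = 1 := by rw [mul_conj, normSq_eq_norm_sq, hz]; simp
  calc ‖1 - conj a * z‖ = ‖z * conj (1 - conj a * z)‖ := by
        rw [norm_mul, norm_conj, hz, one_mul]
    _ = ‖z - a‖ := by
      rw [map_sub, map_one, map_mul, conj_conj, mul_sub, mul_one, mul_left_comm, hzz, mul_one]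

lemma pA_eq_poissonKernel (a : ℂ) (t : ℝ) : pA a t = poissonKernel 0 a (circleMap 0 1 t) := by
  have hz : ‖exp (t * I)‖ = 1 := norm_exp_ofReal_mul_I t
  simp [pA, poissonKernel, circleMap_zero, hz, norm_one_sub_conj_mul_eq_norm_sub hz]

variable {a : ℂ}

lemma tauA_self : tauA a a = 0 := by simp [tauA]

lemma norm_tauA_eq_one {z : ℂ} (hz : ‖z‖ = 1) (hza : z ≠ a) : ‖tauA a z‖ = 1 := by
  rw [tauA, norm_div, norm_one_sub_conj_mul_eq_norm_sub hz,
    div_self (norm_ne_zero_iff.2 (sub_ne_zero.2 hza))]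

lemma conj_tauA_eq_inv {z : ℂ} (hz : ‖z‖ = 1) (hza : z ≠ a) : conj (tauA a z) = (tauA a z)⁻¹ :=
  (inv_eq_conj (norm_tauA_eq_one hz hza)).symm

lemma differentiableOn_tauA (ha : ‖a‖ < 1) : DifferentiableOn ℂ (tauA a) (closedBall 0 1) := by
  intro z hz
  have hden : 1 - conj a * z ≠ 0 := by
    refine sub_ne_zero.2 fun h => ?_
    have : ‖conj a * z‖ < 1 := by
      rw [norm_mul, norm_conj]
      exact mul_lt_one_of_nonneg_of_lt_one_left (norm_nonneg _) ha (by simpa using hz)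
    simp [← h] at this
  unfold tauA
  fun_prop (disch := exact hden)

theorem integral_mul_pA {f : ℂ → ℂ} (hf : DiffContOnCl ℂ f (ball 0 1)) (ha : ‖a‖ < 1) :
    ∫ t in (0:ℝ)..2 * π, f (exp (t * I)) * pA a t = 2 * π * f a := by
  have h := hf.circleAverage_poissonKernel_smul (mem_ball_zero_iff.2 ha)
  rw [Real.circleAverage_def] at h
  simp only [Pi.smul_apply', circleMap_zero, ofReal_one, one_mul, real_smul] at h
  simp_rw [pA_eq_poissonKernel, circleMap_zero, ofReal_one, one_mul, mul_comm (f _)]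
  rw [← h, ofReal_inv, ofReal_mul, ofReal_ofNat, mul_inv_cancel_left₀ (by simp [pi_ne_zero])]

lemma exp_ofReal_mul_I_ne_of_norm_lt_one (ha : ‖a‖ < 1) (t : ℝ) : exp (t * I) ≠ a := by
  rintro rfl
  simp at ha

theorem integral_tauA_zpow_mul_pA (ha : ‖a‖ < 1) (n : ℤ) :
    ∫ t in (0:ℝ)..2 * π, tauA a (exp (t * I)) ^ n * pA a t =
      if n = 0 then (2 * π : ℂ) else 0 := by
  have hpow (j : ℕ) : ∫ t in (0:ℝ)..2 * π, tauA a (exp (t * I)) ^ j * pA a t =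
      ((2 * π * 0 ^ j : ℝ) : ℂ) := by
    simpa [tauA_self] using
      integral_mul_pA (((differentiableOn_tauA ha).pow j).diffContOnCl_ball subset_rfl) ha
  obtain ⟨j, rfl | rfl⟩ := n.eq_nat_or_neg
  · simp [hpow, zero_pow_eq, apply_ite ofReal]
  · have hconj (t : ℝ) : tauA a (exp (t * I)) ^ (-(j : ℤ)) * pA a t =
        conj (tauA a (exp (t * I)) ^ j * pA a t) := by
      rw [map_mul, conj_ofReal, map_pow, conj_tauA_eq_inv (norm_exp_ofReal_mul_I t)
        (exp_ofReal_mul_I_ne_of_norm_lt_one ha t), zpow_neg, zpow_natCast, inv_pow]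
    simp_rw [hconj, intervalIntegral.intervalIntegral_conj, hpow, conj_ofReal]
    simp [zero_pow_eq, apply_ite ofReal]

/-- The system `{τ_a(e^{it})^k : k ∈ ℤ}` is orthonormal with
respect to the inner product `⟨f, g⟩_a = (1/2π)∫₀^{2π} f(t) conj(g(t)) p_a(t) dt`. -/
theorem nonlinear_fourier_basis_orthonormal (a : ℂ) (ha : ‖a‖ < 1)
    (k m : ℤ) :
    (1 / (2 * Real.pi) : ℂ) * ∫ t in (0:ℝ)..(2 * Real.pi),
        (tauA a (Complex.exp (t * Complex.I))) ^ k *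
          (starRingEnd ℂ) ((tauA a (Complex.exp (t * Complex.I))) ^ m) * (pA a t : ℂ) =
      if k = m then 1 else 0 := by
  have hprod (t : ℝ) : tauA a (exp (t * I)) ^ k * conj (tauA a (exp (t * I)) ^ m) =
      tauA a (exp (t * I)) ^ (k - m) := by
    have hz := norm_exp_ofReal_mul_I t
    have hza := exp_ofReal_mul_I_ne_of_norm_lt_one ha t
    have hτ : tauA a (exp (t * I)) ≠ 0 := norm_ne_zero_iff.1 (by simp [norm_tauA_eq_one hz hza])
    rw [map_zpow₀, conj_tauA_eq_inv hz hza, inv_zpow', zpow_sub₀ hτ, div_eq_mul_inv, zpow_neg]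
  simp_rw [hprod, integral_tauA_zpow_mul_pA ha, sub_eq_zero]
  split_ifs
  · field_simp
  · rw [mul_zero]
end

section
/- Let a ∈ ℂ with |a| < 1 and let θ : ℝ → ℝ be a continuous strictly increasing function with e^{iθ(t)} = τ_a(e^{it}) for all t ∈ ℝ. Then θ is differentiable and θ′(t) = p_a(t) for every t ∈ ℝ, where p_a(t) = (1 − |a|²)/|1 − conj(a)·e^{it}|². -/
open Complex ComplexConjugate Topology

theorem hasDerivAt_of_exp_ofReal_mul_I_eq {θ : ℝ → ℝ} {g : ℝ → ℂ} {g' : ℂ} {t : ℝ}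
    (hθ : ContinuousAt θ t) (hg : ∀ s, exp (θ s * I) = g s) (hg' : HasDerivAt g g' t) :
    HasDerivAt θ (g' / g t).im t := by
  have hgt : g t ≠ 0 := hg t ▸ exp_ne_zero _
  have hlog : HasDerivAt (fun s => log (g s / g t)) (g' / g t) t := by
    simpa [hgt] using (hg'.div_const (g t)).clog_real (by simp [hgt])
  refine ((imCLM.hasFDerivAt.comp_hasDerivAt t hlog).const_add (θ t)).congr_of_eventuallyEq ?_
  have hnear : ∀ᶠ s in 𝓝 t, θ s ∈ Set.Ioo (θ t - Real.pi) (θ t + Real.pi) :=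
    hθ.eventually (Ioo_mem_nhds (by linarith [Real.pi_pos]) (by linarith [Real.pi_pos]))
  filter_upwards [hnear] with s ⟨hlo, hhi⟩
  simp only [Function.comp_apply, imCLM_apply]
  rw [← hg s, ← hg t, ← exp_sub, ← sub_mul, log_exp] <;>
    simp only [mul_I_im, sub_re, ofReal_re] <;> linarith

theorem one_sub_conj_mul_ne_zero {a z : ℂ} (ha : ‖a‖ < 1) (hz : ‖z‖ ≤ 1) :
    1 - conj a * z ≠ 0 := by
  have : ‖conj a * z‖ < 1 := by
    rw [norm_mul, RCLike.norm_conj]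
    nlinarith [norm_nonneg a, norm_nonneg z]
  intro h
  rw [← sub_eq_zero.mp h, norm_one] at this
  exact lt_irrefl _ this

theorem hasDerivAt_tauA {a z : ℂ} (hz : 1 - conj a * z ≠ 0) :
    HasDerivAt (tauA a) (((1 - ‖a‖ ^ 2 : ℝ) : ℂ) / (1 - conj a * z) ^ 2) z := by
  refine (((hasDerivAt_id' z).sub_const a).fun_div
    (((hasDerivAt_id' z).const_mul (conj a)).const_sub 1) hz).congr_deriv ?_
  push_cast
  rw [← mul_conj']
  ring

theorem tauA_deriv_mul_eq_of_norm_eq_one {a z : ℂ} (hz : ‖z‖ = 1) (hd : 1 - conj a * z ≠ 0) :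
    ((1 - ‖a‖ ^ 2 : ℝ) : ℂ) / (1 - conj a * z) ^ 2 * z =
      ((1 - ‖a‖ ^ 2) / ‖1 - conj a * z‖ ^ 2 : ℝ) * tauA a z := by
  -- on the unit circle `z (1 - a z̄) = z - a`
  have hzz : z * conj z = 1 := by rw [mul_conj', hz]; simp
  have hd' : conj (1 - conj a * z) ≠ 0 := (map_ne_zero _).mpr hd
  rw [tauA]
  push_cast
  rw [← mul_conj' (1 - conj a * z)]
  field_simp
  simp only [map_sub, map_one, map_mul, conj_conj]
  linear_combination -(1 - (‖a‖ : ℂ) ^ 2) * a * hzz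

theorem hasDerivAt_tauA_exp_ofReal_mul_I {a : ℂ} (ha : ‖a‖ < 1) (t : ℝ) :
    HasDerivAt (fun s : ℝ => tauA a (exp (s * I)))
      (pA a t * I * tauA a (exp (t * I))) t := by
  have hz : ‖exp (t * I)‖ = 1 := norm_exp_ofReal_mul_I t
  have hd := one_sub_conj_mul_ne_zero ha hz.le
  have hexp : HasDerivAt (fun s : ℝ => exp (s * I)) (exp (t * I) * I) t := by
    simpa using ((hasDerivAt_id (t : ℂ)).mul_const I).cexp.comp_ofReal
  refine ((hasDerivAt_tauA hd).comp t hexp).congr_deriv ?_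
  rw [← mul_assoc, tauA_deriv_mul_eq_of_norm_eq_one hz hd, pA]
  ring

theorem phase_hasDerivAt_general (a : ℂ) (ha : ‖a‖ < 1)
    (θ : ℝ → ℝ) (hθcont : Continuous θ)
    (hθ : ∀ t : ℝ, Complex.exp (θ t * Complex.I) =
      tauA a (Complex.exp (t * Complex.I))) :
    ∀ t : ℝ, HasDerivAt θ (pA a t) t := by
  intro t
  have h := hasDerivAt_of_exp_ofReal_mul_I_eq hθcont.continuousAt hθ
    (hasDerivAt_tauA_exp_ofReal_mul_I ha t)
  rwa [← hθ t, mul_div_cancel_right₀ _ (exp_ne_zero _), mul_I_im, ofReal_re] at h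

/-- A continuous strictly increasing branch `θ` of the
nonlinear phase is differentiable with `θ'(t) = p_a(t)`. -/
theorem phase_hasDerivAt (a : ℂ) (ha : ‖a‖ < 1)
    (θ : ℝ → ℝ) (hθcont : Continuous θ) (hθmono : StrictMono θ)
    (hθ : ∀ t : ℝ, Complex.exp (θ t * Complex.I) =
      tauA a (Complex.exp (t * Complex.I))) :
    ∀ t : ℝ, HasDerivAt θ (pA a t) t :=
  phase_hasDerivAt_general a ha θ hθcont hθ
end

section
/- Let 0 < β ≤ 1 and let ω_β ∈ M_β with ω_β(t) > 0 for t > 0. Then there exists a constant K > 0 such that for every natural number M ≥ 0, Σ_{m=0}^{M} 2^{−mβ/2}·(ω_β(2^{−m}))^{−1} ≤ K·2^{−Mβ/2}·(ω_β(2^{−M}))^{−1}. -/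
/-!
Write `a m = 2^{-mβ/2} / ω(2^{-m})`. Monotonicity of `ω` makes `a` decrease at most
geometrically, `a n ≤ 2^{kβ/2} a (n + k)`, while condition (ii) of `M_β` with `νβ ≥ 4` makes it
eventually double every `ν` steps, `2 a n ≤ a (n + ν)`. Splitting off the last `ν` terms, the
partial sum up to `n + ν` is at most `K a n / 2 + ν 2^{νβ/2} a (n + ν)`, and a strong induction
closes with `K ≥ 2 ν 2^{νβ/2}`.
-/

open Finset

section PartialSums

variable {a : ℕ → ℝ}

theorem exists_sum_range_le_mul_of_le (ha : ∀ n, 0 < a n) (L : ℕ) :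
    ∃ K, 0 < K ∧ ∀ M ≤ L, ∑ m ∈ range (M + 1), a m ≤ K * a M := by
  set r : ℕ → ℝ := fun M => (∑ m ∈ range (M + 1), a m) / a M
  have hr : ∀ M, 0 < r M := fun M =>
    div_pos (sum_pos (fun m _ => ha m) nonempty_range_add_one) (ha M)
  refine ⟨∑ M ∈ range (L + 1), r M, sum_pos (fun M _ => hr M) nonempty_range_add_one,
    fun M hM => ?_⟩
  calc ∑ m ∈ range (M + 1), a m = r M * a M := (div_mul_cancel₀ _ (ha M).ne').symm
    _ ≤ (∑ M ∈ range (L + 1), r M) * a M := by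
      gcongr
      · exact (ha M).le
      · exact single_le_sum (fun M _ => (hr M).le) (mem_range.2 (Nat.lt_succ_of_le hM))

theorem exists_sum_range_le_mul_of_two_mul_le (ha : ∀ n, 0 < a n) {ν N : ℕ} {D : ℝ}
    (hν : 0 < ν) (hD : ∀ n k, k ≤ ν → a n ≤ D * a (n + k))
    (hgrow : ∀ n, N ≤ n → 2 * a n ≤ a (n + ν)) :
    ∃ K, 0 < K ∧ ∀ M, ∑ m ∈ range (M + 1), a m ≤ K * a M := by
  obtain ⟨K₀, hK₀, hinit⟩ := exists_sum_range_le_mul_of_le ha (N + ν)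
  set K := max K₀ (2 * ν * D)
  have hK : 0 < K := lt_max_of_lt_left hK₀
  have hblock : ∀ n, ∑ i ∈ range ν, a (n + 1 + i) ≤ ν * D * a (n + ν) := fun n => by
    calc ∑ i ∈ range ν, a (n + 1 + i) ≤ ∑ _i ∈ range ν, D * a (n + ν) := by
          refine sum_le_sum fun i hi => ?_
          have hi : i < ν := mem_range.1 hi
          simpa [show n + 1 + i + (ν - 1 - i) = n + ν by omega] using
            hD (n + 1 + i) (ν - 1 - i) (by omega)
      _ = ν * D * a (n + ν) := by rw [sum_const, card_range, nsmul_eq_mul, mul_assoc]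
  refine ⟨K, hK, fun M => ?_⟩
  induction M using Nat.strong_induction_on with
  | _ M ih =>
    rcases le_or_gt M (N + ν) with hM | hM
    · exact (hinit M hM).trans (by gcongr; exacts [(ha M).le, le_max_left _ _])
    obtain ⟨n, rfl⟩ : ∃ n, M = n + ν := ⟨M - ν, by omega⟩
    have hsplit : ∑ m ∈ range (n + ν + 1), a m
        = ∑ m ∈ range (n + 1), a m + ∑ i ∈ range ν, a (n + 1 + i) := by
      rw [show n + ν + 1 = n + 1 + ν by omega, sum_range_add]
    have hprev : ∑ m ∈ range (n + 1), a m ≤ K / 2 * a (n + ν) := by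
      calc ∑ m ∈ range (n + 1), a m ≤ K * a n := ih n (by omega)
        _ ≤ K / 2 * a (n + ν) := by nlinarith [hgrow n (by omega)]
    have hνD : ν * D ≤ K / 2 := by linarith [le_max_right K₀ (2 * ν * D)]
    rw [hsplit]
    nlinarith [hblock n, ha (n + ν)]

end PartialSums

section WeightedInverse

noncomputable def weightedInv (β : ℝ) (ω : ℝ → ℝ) (m : ℕ) : ℝ :=
  (2 : ℝ) ^ (-(m : ℝ) * β / 2) * (ω (1 / 2 ^ m))⁻¹

variable {β : ℝ} {ω : ℝ → ℝ}

theorem weightedInv_pos (hpos : ∀ t : ℝ, 0 < t → 0 < ω t) (m : ℕ) : 0 < weightedInv β ω m :=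
  mul_pos (by positivity) (inv_pos.2 (hpos _ (by positivity)))

theorem weightedInv_le_mul_add (hmono : MonotoneOn ω (Set.Ici 0))
    (hpos : ∀ t : ℝ, 0 < t → 0 < ω t) (n k : ℕ) :
    weightedInv β ω n ≤ (2 : ℝ) ^ ((k : ℝ) * β / 2) * weightedInv β ω (n + k) := by
  have hω : ω (1 / 2 ^ (n + k)) ≤ ω (1 / 2 ^ n) :=
    hmono (by simp) (by simp)
      (one_div_le_one_div_of_le (by positivity) (pow_le_pow_right₀ one_le_two (by omega)))
  have hexp : (2 : ℝ) ^ (-(n : ℝ) * β / 2)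
      = (2 : ℝ) ^ ((k : ℝ) * β / 2) * (2 : ℝ) ^ (-((n + k : ℕ) : ℝ) * β / 2) := by
    rw [← Real.rpow_add two_pos]; push_cast; ring_nf
  rw [weightedInv, weightedInv, hexp, mul_assoc]
  gcongr
  exact hpos _ (by positivity)

theorem two_mul_weightedInv_le (hpos : ∀ t : ℝ, 0 < t → 0 < ω t) {ν n : ℕ}
    (hνβ : 4 ≤ ν * β)
    (hn : (2 : ℝ) ^ ((ν : ℝ) * β) * ω (1 / 2 ^ (n + ν)) < 2 * ω (1 / 2 ^ n)) :
    2 * weightedInv β ω n ≤ weightedInv β ω (n + ν) := by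
  set x := ω (1 / 2 ^ n)
  set y := ω (1 / 2 ^ (n + ν))
  set p := (2 : ℝ) ^ ((ν : ℝ) * β / 2)
  have hx : 0 < x := hpos _ (by positivity)
  have hy : 0 < y := hpos _ (by positivity)
  have hp4 : 4 ≤ p := by
    calc (4 : ℝ) = 2 ^ (2 : ℝ) := by norm_num
      _ ≤ p := Real.rpow_le_rpow_of_exponent_le one_le_two (by linarith)
  have hsq : (2 : ℝ) ^ ((ν : ℝ) * β) = p * p := by
    rw [← Real.rpow_add two_pos]; ring_nf
  have hexp : (2 : ℝ) ^ (-((n + ν : ℕ) : ℝ) * β / 2) = (2 : ℝ) ^ (-(n : ℝ) * β / 2) / p := by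
    rw [eq_div_iff (by positivity), ← Real.rpow_add two_pos]; push_cast; ring_nf
  -- `4 p y ≤ p² y < 2 x`
  have hkey : 2 * (p * y) ≤ x := by nlinarith
  rw [weightedInv, weightedInv, hexp]
  calc 2 * ((2 : ℝ) ^ (-(n : ℝ) * β / 2) * x⁻¹)
      = (2 : ℝ) ^ (-(n : ℝ) * β / 2) / (p * y) * (2 * (p * y) / x) := by
        field_simp
    _ ≤ (2 : ℝ) ^ (-(n : ℝ) * β / 2) / (p * y) * 1 := by
        gcongr
        exact (div_le_one hx).2 hkey
    _ = (2 : ℝ) ^ (-(n : ℝ) * β / 2) / p * y⁻¹ := by field_simp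

end WeightedInverse

theorem inverse_weighted_sum_bound_general
    (β : ℝ) (hβ0 : 0 < β)
    (ωβ : ℝ → ℝ) (hωβ : MemMClass β ωβ)
    (hωβpos : ∀ t : ℝ, 0 < t → 0 < ωβ t) :
    ∃ K : ℝ, 0 < K ∧ ∀ M : ℕ,
      ∑ m ∈ Finset.range (M + 1), (2:ℝ) ^ (-(m:ℝ) * β / 2) * (ωβ (1 / 2 ^ m))⁻¹ ≤
        K * ((2:ℝ) ^ (-(M:ℝ) * β / 2) * (ωβ (1 / 2 ^ M))⁻¹) := by
  obtain ⟨⟨-, -, hmono, -⟩, -, hdecay⟩ := hωβ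
  have hmono' : MonotoneOn ωβ (Set.Ici 0) := fun s hs t _ hst => hmono s t hs hst
  obtain ⟨ν, hν⟩ := exists_nat_ge (4 / β)
  have hνβ : 4 ≤ ν * β := (div_le_iff₀ hβ0).1 hν
  have hν1 : 1 ≤ ν := Nat.one_le_iff_ne_zero.2 (by rintro rfl; norm_num at hνβ)
  obtain ⟨N, hN⟩ := hdecay ν hν1
  exact exists_sum_range_le_mul_of_two_mul_le (D := 2 ^ ((ν : ℝ) * β / 2))
    (weightedInv_pos hωβpos) hν1
    (fun n k hk => (weightedInv_le_mul_add hmono' hωβpos n k).trans <|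
      mul_le_mul_of_nonneg_right
        (Real.rpow_le_rpow_of_exponent_le one_le_two (by gcongr))
        (weightedInv_pos hωβpos _).le)
    (fun n hn => two_mul_weightedInv_le hωβpos hνβ (hN n hn))

/-- For `0 < β ≤ 1` and `ω_β ∈ M_β` positive on positives:
`Σ_{m=0}^{M} 2^{-mβ/2} (ω_β(2^{-m}))⁻¹ ≤ K 2^{-Mβ/2} (ω_β(2^{-M}))⁻¹`. -/
theorem inverse_weighted_sum_bound
    (β : ℝ) (hβ0 : 0 < β) (hβ1 : β ≤ 1)
    (ωβ : ℝ → ℝ) (hωβ : MemMClass β ωβ)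
    (hωβpos : ∀ t : ℝ, 0 < t → 0 < ωβ t) :
    ∃ K : ℝ, 0 < K ∧ ∀ M : ℕ,
      ∑ m ∈ Finset.range (M + 1), (2:ℝ) ^ (-(m:ℝ) * β / 2) * (ωβ (1 / 2 ^ m))⁻¹ ≤
        K * ((2:ℝ) ^ (-(M:ℝ) * β / 2) * (ωβ (1 / 2 ^ M))⁻¹) :=
  inverse_weighted_sum_bound_general β hβ0 ωβ hωβ hωβpos
end
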